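/- arXiv:1711.11366 — 5 statements merged into one kernel-verified Lean document; each statement's English description precedes it below -/
import Mathlib

section
/- If the Runge-Kutta coefficients satisfy bᵢaᵢⱼ + bⱼaⱼᵢ - bᵢbⱼ = 0 for all i, j, then any Runge-Kutta step applied to an ODE y' = f(y) exactly preserves every quadratic invariant: if ⟨y, S f(y)⟩ = 0 for all y (with S symmetric), then ⟨y¹, S y¹⟩ = ⟨y⁰, S y⁰⟩ where y¹ = y⁰ + Δt Σᵢ bᵢ f(Yᵢ) and Yᵢ = y⁰ + Δt Σⱼ aᵢⱼ f(Yⱼ). -/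
open Matrix

theorem stmt_7 (s n : ℕ) (a : Fin s → Fin s → ℝ) (b : Fin s → ℝ)
    (hsymp : ∀ i j, b i * a i j + b j * a j i - b i * b j = 0)
    (f : (Fin n → ℝ) → (Fin n → ℝ)) (S : Matrix (Fin n) (Fin n) ℝ)
    (hS : S.transpose = S) (hinv : ∀ y, y ⬝ᵥ S.mulVec (f y) = 0)
    (Δt : ℝ) (y0 y1 : Fin n → ℝ) (Y : Fin s → (Fin n → ℝ))
    (hY : ∀ i, Y i = y0 + Δt • ∑ j, a i j • f (Y j))
    (hy1 : y1 = y0 + Δt • ∑ i, b i • f (Y i)) :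
    y1 ⬝ᵥ S.mulVec y1 = y0 ⬝ᵥ S.mulVec y0 := by
  have Bsymm : ∀ x y : Fin n → ℝ, x ⬝ᵥ S.mulVec y = y ⬝ᵥ S.mulVec x := by
    intro x y
    rw [Matrix.dotProduct_mulVec, ← Matrix.mulVec_transpose, hS, dotProduct_comm]
  have mulVec_sum' : ∀ (v : Fin s → Fin n → ℝ),
      S.mulVec (∑ i, v i) = ∑ i, S.mulVec (v i) := by
    intro v
    have h := map_sum S.mulVecLin v Finset.univ
    simp only [Matrix.mulVecLin_apply] at h
    exact h
  have hsumR : ∀ (c : Fin s → ℝ) (x : Fin n → ℝ) (v : Fin s → Fin n → ℝ),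
      x ⬝ᵥ S.mulVec (∑ i, c i • v i) = ∑ i, c i * (x ⬝ᵥ S.mulVec (v i)) := by
    intro c x v
    rw [mulVec_sum' (fun i => c i • v i)]
    simp only [Matrix.mulVec_smul]
    simp only [dotProduct, Finset.sum_apply, Pi.smul_apply, smul_eq_mul,
      Finset.mul_sum]
    rw [Finset.sum_comm]
    exact Finset.sum_congr rfl fun i _ => Finset.sum_congr rfl fun k _ => by ring
  have hsumL : ∀ (c : Fin s → ℝ) (x : Fin n → ℝ) (v : Fin s → Fin n → ℝ),
      (∑ i, c i • v i) ⬝ᵥ S.mulVec x = ∑ i, c i * (v i ⬝ᵥ S.mulVec x) := by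
    intro c x v
    rw [Bsymm, hsumR]
    exact Finset.sum_congr rfl fun i _ => by rw [Bsymm]
  have hy0SF : ∀ i, y0 ⬝ᵥ S.mulVec (f (Y i))
      = -Δt * ∑ j, a i j * (f (Y i) ⬝ᵥ S.mulVec (f (Y j))) := by
    intro i
    have h0 := hinv (Y i)
    nth_rewrite 1 [hY i] at h0
    rw [add_dotProduct, smul_dotProduct,
      Bsymm (∑ j, a i j • f (Y j)) (f (Y i)), hsumR, smul_eq_mul] at h0
    linarith
  rw [hy1]
  simp only [Matrix.mulVec_add, dotProduct_add, add_dotProduct,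
    Matrix.mulVec_smul, dotProduct_smul, smul_dotProduct, smul_eq_mul]
  rw [Bsymm (∑ i, b i • f (Y i)) y0, hsumR b y0, hsumL b _ (fun i => f (Y i))]
  simp only [hsumR, hy0SF]
  have T2 : ∑ i, ∑ j, b i * a i j * (f (Y i) ⬝ᵥ S.mulVec (f (Y j)))
      = ∑ i, ∑ j, b j * a j i * (f (Y i) ⬝ᵥ S.mulVec (f (Y j))) := by
    rw [Finset.sum_comm]
    exact Finset.sum_congr rfl fun i _ => Finset.sum_congr rfl fun j _ => by
      rw [Bsymm (f (Y j)) (f (Y i))]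
  have T4 : ∑ i, ∑ j, b i * b j * (f (Y i) ⬝ᵥ S.mulVec (f (Y j)))
      = 2 * ∑ i, ∑ j, b i * a i j * (f (Y i) ⬝ᵥ S.mulVec (f (Y j))) := by
    rw [two_mul]
    nth_rewrite 2 [T2]
    rw [← Finset.sum_add_distrib]
    refine Finset.sum_congr rfl fun i _ => by
      rw [← Finset.sum_add_distrib]
      refine Finset.sum_congr rfl fun j _ => ?_
      have h : b i * b j = b i * a i j + b j * a j i := by linarith [hsymp i j]
      rw [h, add_mul]
  have e1 : ∑ i, b i * (-Δt * ∑ j, a i j * (f (Y i) ⬝ᵥ S.mulVec (f (Y j))))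
      = -Δt * ∑ i, ∑ j, b i * a i j * (f (Y i) ⬝ᵥ S.mulVec (f (Y j))) := by
    rw [Finset.mul_sum]
    refine Finset.sum_congr rfl fun i _ => by
      rw [Finset.mul_sum, Finset.mul_sum, Finset.mul_sum]
      exact Finset.sum_congr rfl fun j _ => by ring
  have e2 : ∑ i, b i * ∑ j, b j * (f (Y i) ⬝ᵥ S.mulVec (f (Y j)))
      = ∑ i, ∑ j, b i * b j * (f (Y i) ⬝ᵥ S.mulVec (f (Y j))) := by
    refine Finset.sum_congr rfl fun i _ => by
      rw [Finset.mul_sum]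
      exact Finset.sum_congr rfl fun j _ => by ring
  rw [e1, e2, T4]
  ring
end

section
/- For an s-stage Runge-Kutta method applied to two coupled ODEs f' = F, g' = G, the discrete product update satisfies (f¹·g¹ - f⁰·g⁰)/Δt = Σᵢ bᵢ fᵢ Gᵢ + Σᵢ bᵢ gᵢ Fᵢ - Δt Σᵢⱼ (bᵢaᵢⱼ + bⱼaⱼᵢ - bᵢbⱼ) Fᵢ Gⱼ, where fᵢ = f⁰ + Δt Σⱼ aᵢⱼ Fⱼ, gᵢ = g⁰ + Δt Σⱼ aᵢⱼ Gⱼ, f¹ = f⁰ + Δt Σᵢ bᵢ Fᵢ, g¹ = g⁰ + Δt Σᵢ bᵢ Gᵢ. -/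
theorem stmt_8 (s : ℕ) (a : Fin s → Fin s → ℝ) (b : Fin s → ℝ)
    (f0 g0 Δt : ℝ) (hΔt : Δt ≠ 0) (F G : Fin s → ℝ)
    (f g : Fin s → ℝ) (f1 g1 : ℝ)
    (hf : ∀ i, f i = f0 + Δt * ∑ j, a i j * F j)
    (hg : ∀ i, g i = g0 + Δt * ∑ j, a i j * G j)
    (hf1 : f1 = f0 + Δt * ∑ i, b i * F i)
    (hg1 : g1 = g0 + Δt * ∑ i, b i * G i) :
    (f1 * g1 - f0 * g0) / Δt =
      (∑ i, b i * f i * G i) + (∑ i, b i * g i * F i)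
        - Δt * ∑ i, ∑ j, (b i * a i j + b j * a j i - b i * b j) * F i * G j := by
  rw [div_eq_iff hΔt]
  subst hf1 hg1
  simp only [hf, hg, Finset.mul_sum, Finset.sum_mul, mul_add, add_mul, mul_sub, sub_mul,
    Finset.sum_add_distrib, Finset.sum_sub_distrib]
  rw [Finset.sum_comm (f := fun x i => Δt * (b i * a i x * F x * G i) * Δt),
    Finset.sum_comm (f := fun x i => Δt * (b i * F i) * (Δt * (b x * G x)))]
  simp only [mul_comm, mul_left_comm, mul_assoc]
  ring
end

section
/- Consider the Runge-Kutta update uⁿ⁺¹ = uⁿ + Δt Σᵢ bᵢ Fᵢ with stage values uᵢ = uⁿ + Δt Σⱼ aᵢⱼ Fⱼ, where Fᵢ ∈ ℝⁿ. Then the kinetic-energy change satisfies (‖uⁿ⁺¹‖² - ‖uⁿ‖²)/(2Δt) = Σᵢ bᵢ ⟨uᵢ, Fᵢ⟩ - (Δt/2) Σᵢⱼ (bᵢaᵢⱼ + bⱼaⱼᵢ - bᵢbⱼ) ⟨Fᵢ, Fⱼ⟩. -/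
open Matrix

theorem stmt_9 (s n : ℕ) (a : Fin s → Fin s → ℝ) (b : Fin s → ℝ)
    (Δt : ℝ) (hΔt : Δt ≠ 0) (un un1 : Fin n → ℝ) (F : Fin s → (Fin n → ℝ))
    (u : Fin s → (Fin n → ℝ))
    (hu : ∀ i, u i = un + Δt • ∑ j, a i j • F j)
    (hun1 : un1 = un + Δt • ∑ i, b i • F i) :
    (un1 ⬝ᵥ un1 - un ⬝ᵥ un) / (2 * Δt) =
      (∑ i, b i * (u i ⬝ᵥ F i))
        - Δt / 2 * ∑ i, ∑ j, (b i * a i j + b j * a j i - b i * b j) * (F i ⬝ᵥ F j) := by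
  subst hun1
  have hL : ∀ (x : Fin s → ℝ) (w : Fin n → ℝ),
      (∑ i, x i • F i) ⬝ᵥ w = ∑ i, x i * (F i ⬝ᵥ w) := by
    intro x w
    simp only [dotProduct, Finset.sum_apply, Pi.smul_apply, smul_eq_mul, Finset.sum_mul,
      Finset.mul_sum]
    rw [Finset.sum_comm]
    exact Finset.sum_congr rfl fun i _ => Finset.sum_congr rfl fun k _ => by ring
  have hR : ∀ (v : Fin n → ℝ) (x : Fin s → ℝ),
      v ⬝ᵥ (∑ i, x i • F i) = ∑ i, x i * (v ⬝ᵥ F i) := by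
    intro v x
    simp only [dotProduct, Finset.sum_apply, Pi.smul_apply, smul_eq_mul, Finset.mul_sum]
    rw [Finset.sum_comm]
    exact Finset.sum_congr rfl fun i _ => Finset.sum_congr rfl fun k _ => by ring
  have h1 : ∀ x : Fin s → ℝ, un ⬝ᵥ (∑ i, x i • F i) = ∑ i, x i * (un ⬝ᵥ F i) := fun x => hR un x
  have h3 : ∀ x y : Fin s → ℝ,
      (∑ i, x i • F i) ⬝ᵥ (∑ j, y j • F j)
        = ∑ i, ∑ j, x i * y j * (F i ⬝ᵥ F j) := by
    intro x y
    rw [hL]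
    refine Finset.sum_congr rfl fun i _ => ?_
    rw [hR, Finset.mul_sum]
    exact Finset.sum_congr rfl fun j _ => by ring
  have hui : ∀ i, u i ⬝ᵥ F i = un ⬝ᵥ F i + Δt * ∑ j, a i j * (F j ⬝ᵥ F i) := by
    intro i
    rw [hu i, add_dotProduct, smul_dotProduct, hL, smul_eq_mul]
  have hBun : (∑ i, b i • F i) ⬝ᵥ un = un ⬝ᵥ ∑ i, b i • F i := dotProduct_comm _ _
  simp only [dotProduct_add, add_dotProduct, smul_dotProduct, dotProduct_smul, smul_eq_mul,
    hBun, h1 b, h3 b b, hui]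
  have key : ∑ i, ∑ j, (b j * a j i) * (F i ⬝ᵥ F j)
      = ∑ i, ∑ j, (b i * a i j) * (F j ⬝ᵥ F i) := by
    rw [Finset.sum_comm]
  have hSS : ∑ i, ∑ j, (b i * a i j) * (F i ⬝ᵥ F j)
      = ∑ i, ∑ j, (b i * a i j) * (F j ⬝ᵥ F i) := by
    refine Finset.sum_congr rfl fun i _ => Finset.sum_congr rfl fun j _ => ?_
    rw [dotProduct_comm]
  have expand1 : ∑ i, b i * (un ⬝ᵥ F i + Δt * ∑ j, a i j * (F j ⬝ᵥ F i))
      = (∑ i, b i * (un ⬝ᵥ F i)) + Δt * ∑ i, ∑ j, (b i * a i j) * (F j ⬝ᵥ F i) := by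
    rw [Finset.mul_sum, ← Finset.sum_add_distrib]
    refine Finset.sum_congr rfl fun i _ => ?_
    rw [mul_add]
    congr 1
    rw [Finset.mul_sum, Finset.mul_sum, Finset.mul_sum]
    exact Finset.sum_congr rfl fun j _ => by ring
  have expand2 : ∑ i, ∑ j, (b i * a i j + b j * a j i - b i * b j) * (F i ⬝ᵥ F j)
      = (∑ i, ∑ j, (b i * a i j) * (F i ⬝ᵥ F j))
        + (∑ i, ∑ j, (b j * a j i) * (F i ⬝ᵥ F j))
        - ∑ i, ∑ j, (b i * b j) * (F i ⬝ᵥ F j) := by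
    simp only [sub_mul, add_mul, Finset.sum_add_distrib, Finset.sum_sub_distrib]
  have hQ : ∑ i, ∑ j, b i * b j * (F i ⬝ᵥ F j)
      = ∑ i, ∑ j, (b i * b j) * (F i ⬝ᵥ F j) := rfl
  rw [expand1, expand2, key, hSS, hQ]
  field_simp
  ring
end

section
/- Under the RK update of the previous context, the discrete helicity hⁿ = ⟨uⁿ, R uⁿ⟩ with R symmetric satisfies (hⁿ⁺¹ - hⁿ)/Δt = 2 Σᵢ bᵢ ⟨uᵢ, R Fᵢ⟩ - Δt Σᵢⱼ (bᵢaᵢⱼ + bⱼaⱼᵢ - bᵢbⱼ) ⟨Fᵢ, R Fⱼ⟩. -/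
open Matrix

theorem stmt_10 (s n : ℕ) (a : Fin s → Fin s → ℝ) (b : Fin s → ℝ)
    (R : Matrix (Fin n) (Fin n) ℝ) (hR : R.transpose = R)
    (Δt : ℝ) (hΔt : Δt ≠ 0) (un un1 : Fin n → ℝ) (F : Fin s → (Fin n → ℝ))
    (u : Fin s → (Fin n → ℝ))
    (hu : ∀ i, u i = un + Δt • ∑ j, a i j • F j)
    (hun1 : un1 = un + Δt • ∑ i, b i • F i) :
    (un1 ⬝ᵥ R.mulVec un1 - un ⬝ᵥ R.mulVec un) / Δt =
      2 * (∑ i, b i * (u i ⬝ᵥ R.mulVec (F i)))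
        - Δt * ∑ i, ∑ j, (b i * a i j + b j * a j i - b i * b j) * (F i ⬝ᵥ R.mulVec (F j)) := by
  have hsym : ∀ x y : Fin n → ℝ, x ⬝ᵥ R.mulVec y = y ⬝ᵥ R.mulVec x := by
    intro x y
    rw [Matrix.dotProduct_mulVec, ← Matrix.mulVec_transpose, hR, dotProduct_comm]
  have hsum : ∀ (x : Fin n → ℝ) (g : Fin s → Fin n → ℝ),
      x ⬝ᵥ R.mulVec (∑ i, g i) = ∑ i, x ⬝ᵥ R.mulVec (g i) := by
    intro x g
    rw [show R.mulVec (∑ i, g i) = ∑ i, R.mulVec (g i) from map_sum R.mulVecLin g _]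
    simp [dotProduct, Finset.mul_sum, Finset.sum_apply]
    exact Finset.sum_comm
  have hsmul : ∀ (c : ℝ) (x y : Fin n → ℝ),
      x ⬝ᵥ R.mulVec (c • y) = c * (x ⬝ᵥ R.mulVec y) := by
    intro c x y
    rw [Matrix.mulVec_smul, dotProduct_smul, smul_eq_mul]
  have hadd : ∀ (x y z : Fin n → ℝ),
      x ⬝ᵥ R.mulVec (y + z) = x ⬝ᵥ R.mulVec y + x ⬝ᵥ R.mulVec z := by
    intro x y z
    rw [Matrix.mulVec_add, dotProduct_add]
  set S : Fin n → ℝ := ∑ i, b i • F i with hS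
  have hBS : ∀ x : Fin n → ℝ, x ⬝ᵥ R.mulVec S = ∑ i, b i * (x ⬝ᵥ R.mulVec (F i)) := by
    intro x
    rw [hS, hsum]
    exact Finset.sum_congr rfl fun i _ => hsmul _ _ _
  have hSS : S ⬝ᵥ R.mulVec S = ∑ i, ∑ j, b i * b j * (F i ⬝ᵥ R.mulVec (F j)) := by
    rw [hsym S S, hBS]
    refine Finset.sum_congr rfl fun i _ => ?_
    rw [hsym, hBS, Finset.mul_sum]
    exact Finset.sum_congr rfl fun j _ => by ring
  have hLHS : un1 ⬝ᵥ R.mulVec un1 - un ⬝ᵥ R.mulVec un =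
      2 * Δt * (∑ i, b i * (un ⬝ᵥ R.mulVec (F i)))
        + Δt * Δt * ∑ i, ∑ j, b i * b j * (F i ⬝ᵥ R.mulVec (F j)) := by
    rw [hun1]
    rw [show (un + Δt • S) ⬝ᵥ R.mulVec (un + Δt • S)
        = un ⬝ᵥ R.mulVec un + Δt * (un ⬝ᵥ R.mulVec S) + Δt * (S ⬝ᵥ R.mulVec un)
          + Δt * (Δt * (S ⬝ᵥ R.mulVec S)) by
      rw [hadd, hsmul, add_dotProduct, add_dotProduct,
        smul_dotProduct, smul_dotProduct, smul_eq_mul, smul_eq_mul]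
      ring]
    rw [hsym S un, hBS un, hSS]
    ring
  have hRHS1 : ∑ i, b i * (u i ⬝ᵥ R.mulVec (F i)) =
      (∑ i, b i * (un ⬝ᵥ R.mulVec (F i)))
        + Δt * ∑ i, ∑ j, b i * a i j * (F j ⬝ᵥ R.mulVec (F i)) := by
    rw [Finset.mul_sum, ← Finset.sum_add_distrib]
    refine Finset.sum_congr rfl fun i _ => ?_
    have : u i ⬝ᵥ R.mulVec (F i)
        = un ⬝ᵥ R.mulVec (F i) + Δt * ∑ j, a i j * (F j ⬝ᵥ R.mulVec (F i)) := by
      rw [hsym, hu i, hadd, hsmul, hsum, hsym (F i) un]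
      congr 2
      refine Finset.sum_congr rfl fun j _ => ?_
      rw [hsmul, hsym]
    rw [this, mul_add, Finset.mul_sum, Finset.mul_sum, Finset.mul_sum]
    exact congrArg _ (Finset.sum_congr rfl fun j _ => by ring)
  rw [hLHS, hRHS1]
  have hswap : ∑ i, ∑ j, b j * a j i * (F i ⬝ᵥ R.mulVec (F j)) =
      ∑ i, ∑ j, b i * a i j * (F j ⬝ᵥ R.mulVec (F i)) := Finset.sum_comm
  have hexp : ∑ i, ∑ j, (b i * a i j + b j * a j i - b i * b j) * (F i ⬝ᵥ R.mulVec (F j)) =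
      (∑ i, ∑ j, b i * a i j * (F i ⬝ᵥ R.mulVec (F j)))
      + (∑ i, ∑ j, b j * a j i * (F i ⬝ᵥ R.mulVec (F j)))
      - (∑ i, ∑ j, b i * b j * (F i ⬝ᵥ R.mulVec (F j))) := by
    rw [← Finset.sum_add_distrib, ← Finset.sum_sub_distrib]
    refine Finset.sum_congr rfl fun i _ => ?_
    rw [← Finset.sum_add_distrib, ← Finset.sum_sub_distrib]
    exact Finset.sum_congr rfl fun j _ => by ring
  have hsym2 : ∑ i, ∑ j, b i * a i j * (F i ⬝ᵥ R.mulVec (F j)) =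
      ∑ i, ∑ j, b i * a i j * (F j ⬝ᵥ R.mulVec (F i)) := by
    refine Finset.sum_congr rfl fun i _ => Finset.sum_congr rfl fun j _ => ?_
    rw [hsym]
  rw [hexp, hswap, hsym2]
  field_simp
  ring
end

section
/- If a Runge-Kutta scheme satisfies the symplecticity condition bᵢaᵢⱼ + bⱼaⱼᵢ = bᵢbⱼ for all i,j, and at each stage ⟨uᵢ, R Fᵢ⟩ = 0 where R is symmetric, then the discrete helicity hⁿ = ⟨uⁿ, R uⁿ⟩ is exactly conserved: hⁿ⁺¹ = hⁿ. -/
open Matrix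

theorem stmt_11 (s n : ℕ) (a : Fin s → Fin s → ℝ) (b : Fin s → ℝ)
    (hsymp : ∀ i j, b i * a i j + b j * a j i = b i * b j)
    (R : Matrix (Fin n) (Fin n) ℝ) (hR : R.transpose = R)
    (Δt : ℝ) (un un1 : Fin n → ℝ) (F : Fin s → (Fin n → ℝ))
    (u : Fin s → (Fin n → ℝ))
    (hu : ∀ i, u i = un + Δt • ∑ j, a i j • F j)
    (hun1 : un1 = un + Δt • ∑ i, b i • F i)
    (hstage : ∀ i, u i ⬝ᵥ R.mulVec (F i) = 0) :
    un1 ⬝ᵥ R.mulVec un1 = un ⬝ᵥ R.mulVec un := by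
  -- symmetry of the bilinear form ⟨x, R y⟩
  have hsym : ∀ x y : Fin n → ℝ, x ⬝ᵥ R.mulVec y = y ⬝ᵥ R.mulVec x := by
    intro x y
    rw [Matrix.dotProduct_mulVec, ← Matrix.mulVec_transpose, hR, dotProduct_comm]
  have hmvsum : ∀ (c : Fin s → ℝ) (G : Fin s → Fin n → ℝ),
      R.mulVec (∑ i, c i • G i) = ∑ i, c i • R.mulVec (G i) := by
    intro c G
    rw [← Matrix.mulVecLin_apply]; simp
  -- dot product with a linear combination
  have hd₁ : ∀ (x : Fin n → ℝ) (c : Fin s → ℝ) (G : Fin s → Fin n → ℝ),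
      x ⬝ᵥ (∑ i, c i • G i) = ∑ i, c i * (x ⬝ᵥ G i) := by
    intro x c G
    simp only [dotProduct, Finset.sum_apply, Pi.smul_apply, smul_eq_mul, Finset.mul_sum]
    rw [Finset.sum_comm]
    exact Finset.sum_congr rfl fun i _ => Finset.sum_congr rfl fun k _ => by ring
  have hd₂ : ∀ (x : Fin n → ℝ) (c : Fin s → ℝ) (G : Fin s → Fin n → ℝ),
      (∑ i, c i • G i) ⬝ᵥ x = ∑ i, c i * (G i ⬝ᵥ x) := by
    intro x c G
    simp only [dotProduct, Finset.sum_apply, Pi.smul_apply, smul_eq_mul, Finset.mul_sum,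
      Finset.sum_mul]
    rw [Finset.sum_comm]
    exact Finset.sum_congr rfl fun i _ => Finset.sum_congr rfl fun k _ => by ring
  set g : Fin s → Fin s → ℝ := fun i j => F i ⬝ᵥ R.mulVec (F j) with hg
  have hgsym : ∀ i j, g i j = g j i := fun i j => hsym _ _
  -- stage condition expanded
  have hBun : ∀ i, un ⬝ᵥ R.mulVec (F i) = -(Δt * ∑ j, a i j * g j i) := by
    intro i
    have h := hstage i
    rw [hu i, add_dotProduct, smul_dotProduct, hd₂, smul_eq_mul] at h
    linarith [h]
  -- expansions of the cross and quadratic terms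
  have e1 : un ⬝ᵥ R.mulVec (Δt • ∑ i, b i • F i)
      = Δt * ∑ i, b i * (un ⬝ᵥ R.mulVec (F i)) := by
    rw [Matrix.mulVec_smul, dotProduct_smul, smul_eq_mul, hmvsum, hd₁]
  have e2 : (Δt • ∑ i, b i • F i) ⬝ᵥ R.mulVec un
      = Δt * ∑ i, b i * (un ⬝ᵥ R.mulVec (F i)) := by
    rw [hsym]; exact e1
  have e3 : (Δt • ∑ i, b i • F i) ⬝ᵥ R.mulVec (Δt • ∑ j, b j • F j)
      = Δt * (Δt * ∑ j, ∑ i, b j * (b i * g i j)) := by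
    rw [smul_dotProduct, Matrix.mulVec_smul, dotProduct_smul, smul_eq_mul, smul_eq_mul,
      hmvsum, hd₁]
    congr 1; congr 1
    refine Finset.sum_congr rfl fun j _ => ?_
    rw [hd₂, Finset.mul_sum]
  -- the linear-in-Δt term via the stage condition
  have h2 : ∑ i, b i * (un ⬝ᵥ R.mulVec (F i))
      = -(Δt * ∑ i, ∑ j, b i * (a i j * g j i)) := by
    calc ∑ i, b i * (un ⬝ᵥ R.mulVec (F i))
        = ∑ i, -(Δt * ∑ j, b i * (a i j * g j i)) := by
          refine Finset.sum_congr rfl fun i _ => ?_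
          rw [hBun i, ← Finset.mul_sum]
          ring
      _ = -(Δt * ∑ i, ∑ j, b i * (a i j * g j i)) := by
          rw [Finset.mul_sum, ← Finset.sum_neg_distrib]
  -- the quadratic term via symplecticity and symmetry
  have key : ∑ j, ∑ i, b j * (b i * g i j)
      = 2 * ∑ i, ∑ j, b i * (a i j * g j i) := by
    have hbb : ∀ j i, b j * (b i * g i j)
        = b i * (a i j * g i j) + b j * (a j i * g i j) := by
      intro j i
      have h := hsymp i j
      calc b j * (b i * g i j) = (b i * a i j + b j * a j i) * g i j := by rw [h]; ring
        _ = b i * (a i j * g i j) + b j * (a j i * g i j) := by ring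
    simp only [hbb, Finset.sum_add_distrib]
    rw [Finset.sum_comm (f := fun j i => b i * (a i j * g i j))]
    have l1 : ∑ i, ∑ j, b i * (a i j * g i j) = ∑ i, ∑ j, b i * (a i j * g j i) :=
      Finset.sum_congr rfl fun i _ => Finset.sum_congr rfl fun j _ => by rw [hgsym i j]
    have l2 : ∑ j, ∑ i, b j * (a j i * g i j) = ∑ i, ∑ j, b i * (a i j * g j i) := rfl
    rw [l1, l2]; ring
  rw [hun1, Matrix.mulVec_add, dotProduct_add, add_dotProduct, add_dotProduct,
    e1, e2, e3, h2, key]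
  ring
end
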